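/- Let y ∈ 𝒴 and let y* be an optimal solution of (Prox-DSM) closest to y. Then ⟨∇g(y), y* − y⟩ ≤ −(2/(n²r)) ‖y − y*‖². -/

import Mathlib

open scoped RealInnerProductSpace Pointwise

noncomputable section

/-- A set function on the ground set `V = {1,…,n}` (modeled as `Fin n`) is submodular if
`F(A ∩ B) + F(A ∪ B) ≤ F(A) + F(B)` for all `A, B ⊆ V`. -/
def Submodular {n : ℕ} (F : Finset (Fin n) → ℝ) : Prop :=
  ∀ A B : Finset (Fin n), F (A ∩ B) + F (A ∪ B) ≤ F A + F B

/-- The base polytope `B(F) = {w ∈ ℝⁿ | ∀ A ⊆ V, w(A) ≤ F(A), and w(V) = F(V)}`. -/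
def basePolytope (n : ℕ) (F : Finset (Fin n) → ℝ) : Set (EuclideanSpace ℝ (Fin n)) :=
  {w | (∀ A : Finset (Fin n), ∑ i ∈ A, w i ≤ F A) ∧ (∑ i, w i = F Finset.univ)}

/-- `ℝ^{nr}` with the Euclidean norm, written in `r` blocks of `n` coordinates. -/
abbrev Vec (n r : ℕ) := PiLp 2 (fun _ : Fin r => EuclideanSpace ℝ (Fin n))

/-- The feasible set `𝒴 = ∏ᵢ B(Fᵢ)` of (Prox-DSM). -/
def feas (n r : ℕ) (F : Fin r → Finset (Fin n) → ℝ) : Set (Vec n r) :=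
  {y | ∀ i, y i ∈ basePolytope n (F i)}

/-- The objective `g(y) = ‖∑ᵢ y⁽ⁱ⁾‖²` of (Prox-DSM). -/
def g (n r : ℕ) (y : Vec n r) : ℝ := ‖∑ i, y i‖ ^ 2

/-- The `i`-th block of the gradient of `g`: `∇ᵢ g(y) = 2 ∑ⱼ y⁽ʲ⁾` (the same for every `i`). -/
def gradBlock (n r : ℕ) (y : Vec n r) : EuclideanSpace ℝ (Fin n) := (2 : ℝ) • ∑ j, y j

/-- The full gradient `∇g(y) ∈ ℝ^{nr}`, whose every block equals `2 ∑ⱼ y⁽ʲ⁾`. -/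
def gradg (n r : ℕ) (y : Vec n r) : Vec n r := WithLp.toLp 2 (fun _ => gradBlock n r y)

/-- `y` is an optimal solution of (Prox-DSM). -/
def IsOptimal (n r : ℕ) (F : Fin r → Finset (Fin n) → ℝ) (y : Vec n r) : Prop :=
  y ∈ feas n r F ∧ ∀ z ∈ feas n r F, g n r y ≤ g n r z

/-- The linear map `S = (1/√r)[Iₙ Iₙ ⋯ Iₙ]`, i.e. `S y = (1/√r) ∑ᵢ y⁽ⁱ⁾`. -/
def Smap (n r : ℕ) (y : Vec n r) : EuclideanSpace ℝ (Fin n) := (Real.sqrt r)⁻¹ • ∑ i, y i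

/-- Distance between two sets: `d(K₁, K₂) = inf{‖k₁ - k₂‖ : k₁ ∈ K₁, k₂ ∈ K₂}`. -/
def setDist {E : Type*} [PseudoMetricSpace E] (A B : Set E) : ℝ :=
  sInf ((fun p : E × E => dist p.1 p.2) '' (A ×ˢ B))

/-!
Write `S = ∑ᵢ yᵢ` and `A = ∑ᵢ y*ᵢ`. As `A` minimizes `‖·‖²` over the convex set of block sums,
`⟪A, S - A⟫ ≥ 0`, hence `⟪∇g(y), y* - y⟫ = 2⟪S, A - S⟫ ≤ -2‖S - A‖²`. On the other hand,
pushing mass along exchange paths of the base polytopes turns `y` into a feasible `z` with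
`∑ᵢ zᵢ = A`, hence an optimal one, each of whose coordinates is within
`‖S - A‖₁ ≤ √n ‖S - A‖` of that of `y`; so `‖y - y*‖² ≤ ‖y - z‖² ≤ n² r ‖S - A‖²`.
-/

open Filter Topology

theorem Relation.ReflTransGen.exists_path {α : Type*} {R : α → α → Prop} {u v : α}
    (h : Relation.ReflTransGen R u v) :
    ∃ (k : ℕ) (f : ℕ → α), f 0 = u ∧ f k = v ∧ ∀ j < k, R (f j) (f (j + 1)) := by
  induction h with
  | refl => exact ⟨0, fun _ => u, rfl, rfl, by simp⟩
  | @tail b c _ hbc ih =>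
    obtain ⟨k, f, hf0, hfk, hR⟩ := ih
    refine ⟨k + 1, fun j => if j ≤ k then f j else c, by simp [hf0], by simp, fun j hj => ?_⟩
    rcases Nat.lt_or_eq_of_le (Nat.lt_succ_iff.mp hj) with hj | rfl
    · simpa [hj.le, Nat.succ_le_of_lt hj] using hR j hj
    · simpa [hfk] using hbc

theorem Relation.ReflTransGen.exists_injOn_path {α : Type*} {R : α → α → Prop} {u v : α}
    (h : Relation.ReflTransGen R u v) :
    ∃ (k : ℕ) (f : ℕ → α), f 0 = u ∧ f k = v ∧ (∀ j < k, R (f j) (f (j + 1))) ∧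
      Set.InjOn f (Set.Iic k) := by
  classical
  have hex := h.exists_path
  obtain ⟨f, hf0, hfk, hR⟩ := Nat.find_spec hex
  refine ⟨_, f, hf0, hfk, hR, ?_⟩
  suffices ∀ j j', j < j' → j' ≤ Nat.find hex → f j ≠ f j' by
    intro j hj j' hj' heq
    by_contra hne
    rcases Nat.lt_or_gt_of_ne hne with hlt | hlt
    · exact this j j' hlt hj' heq
    · exact this j' j hlt hj heq.symm
  intro j j' hjj' hj' heq
  set k := Nat.find hex
  -- a repeated vertex would allow a shortcut of length `k - (j' - j)`
  refine Nat.find_min hex (m := k - (j' - j)) (by omega)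
    ⟨fun i => if i ≤ j then f i else f (i + (j' - j)), by simp [hf0], ?_, fun i hi => ?_⟩
  · by_cases hkj : k - (j' - j) ≤ j
    · have : j' = k := by omega
      simp only [hkj, if_true]; rw [show k - (j' - j) = j by omega, heq, this, hfk]
    · simp only [hkj, if_false]; rw [show k - (j' - j) + (j' - j) = k by omega, hfk]
  · rcases lt_trichotomy i j with hij | rfl | hij
    · simpa [hij.le, Nat.succ_le_of_lt hij] using hR i (by omega)
    · simpa [heq, show i + 1 + (j' - i) = j' + 1 by omega] using hR j' (by omega)
    · simpa [show ¬ i ≤ j by omega, show ¬ i + 1 ≤ j by omega,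
        show i + 1 + (j' - j) = i + (j' - j) + 1 by omega] using hR (i + (j' - j)) (by omega)

lemma sum_abs_add_transfer {ι : Type*} [Fintype ι] [DecidableEq ι] {t : ι → ℝ} {u v : ι}
    (huv : u ≠ v) {ε : ℝ} (hε : 0 ≤ ε) (hu : ε ≤ t u) (hv : ε ≤ -t v) :
    ∑ x, |t x + ε * ((if v = x then 1 else 0) - (if u = x then 1 else 0))| =
      ∑ x, |t x| - 2 * ε := by
  have hterm : ∀ x, |t x + ε * ((if v = x then 1 else 0) - (if u = x then 1 else 0))| =
      |t x| - ε * ((if u = x then 1 else 0) + (if v = x then 1 else 0)) := by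
    intro x
    by_cases hux : u = x
    · subst hux
      simp only [huv.symm, if_true, if_false]
      rw [abs_of_nonneg (by linarith), abs_of_nonneg (by linarith)]
      ring
    by_cases hvx : v = x
    · subst hvx
      simp only [hux, if_true, if_false]
      rw [abs_of_nonpos (by linarith), abs_of_nonpos (by linarith)]
      ring
    · simp [hux, hvx]
  simp only [hterm, Finset.sum_sub_distrib, ← Finset.mul_sum, Finset.sum_add_distrib,
    Finset.sum_ite_eq, Finset.mem_univ, if_true]
  ring

def l1Dist {n : ℕ} (u v : EuclideanSpace ℝ (Fin n)) : ℝ := ∑ x, |u x - v x|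

lemma l1Dist_nonneg {n : ℕ} (u v : EuclideanSpace ℝ (Fin n)) : 0 ≤ l1Dist u v :=
  Finset.sum_nonneg fun _ _ => abs_nonneg _

lemma eq_of_l1Dist_eq_zero {n : ℕ} {u v : EuclideanSpace ℝ (Fin n)} (h : l1Dist u v = 0) :
    u = v := by
  ext x
  have := (Finset.sum_eq_zero_iff_of_nonneg fun x _ => abs_nonneg (u x - v x)).mp h x
    (Finset.mem_univ x)
  exact sub_eq_zero.mp (abs_eq_zero.mp this)

lemma l1Dist_sq_le {n : ℕ} (u v : EuclideanSpace ℝ (Fin n)) :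
    l1Dist u v ^ 2 ≤ n * ‖u - v‖ ^ 2 := by
  rw [l1Dist, EuclideanSpace.norm_sq_eq]
  simpa [sq_abs] using sq_sum_le_card_mul_sum_sq (s := Finset.univ) (f := fun x => |u x - v x|)

lemma norm_sq_le_of_forall_abs_le {n r : ℕ} {u : Vec n r} {M : ℝ} (hu : ∀ i x, |u i x| ≤ M) :
    ‖u‖ ^ 2 ≤ n * r * M ^ 2 := by
  rw [PiLp.norm_sq_eq_of_L2]
  calc ∑ i, ‖u i‖ ^ 2 = ∑ i, ∑ x, |u i x| ^ 2 := by simp [EuclideanSpace.norm_sq_eq]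
    _ ≤ ∑ _i : Fin r, ∑ _x : Fin n, M ^ 2 := by
      gcongr with i _ x
      exact hu i x
    _ = n * r * M ^ 2 := by simp; ring

def IsTight {n : ℕ} (F : Finset (Fin n) → ℝ) (w : EuclideanSpace ℝ (Fin n))
    (A : Finset (Fin n)) : Prop :=
  ∑ i ∈ A, w i = F A

section TightSets

variable {n : ℕ} {F : Finset (Fin n) → ℝ} {w : EuclideanSpace ℝ (Fin n)}

lemma isTight_univ (hw : w ∈ basePolytope n F) : IsTight F w Finset.univ := hw.2

lemma isTight_empty (hF0 : F ∅ = 0) : IsTight F w ∅ := by simp [IsTight, hF0]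

lemma IsTight.inter_union (hF : Submodular F) (hw : w ∈ basePolytope n F)
    {A B : Finset (Fin n)} (hA : IsTight F w A) (hB : IsTight F w B) :
    IsTight F w (A ∩ B) ∧ IsTight F w (A ∪ B) := by
  have hsum : ∑ i ∈ A ∪ B, w i + ∑ i ∈ A ∩ B, w i = ∑ i ∈ A, w i + ∑ i ∈ B, w i :=
    Finset.sum_union_inter
  have hinter := hw.1 (A ∩ B)
  have hunion := hw.1 (A ∪ B)
  have hsubmod := hF A B
  unfold IsTight at *
  constructor <;> linarith

lemma isTight_finset_inf (hF : Submodular F) (hw : w ∈ basePolytope n F) {ι : Type*}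
    {s : Finset ι} {T : ι → Finset (Fin n)} (hT : ∀ i ∈ s, IsTight F w (T i)) :
    IsTight F w (s.inf T) :=
  Finset.inf_induction (isTight_univ hw) (fun _ hA _ hB => (hA.inter_union hF hw hB).1) hT

lemma isTight_finset_sup (hF : Submodular F) (hw : w ∈ basePolytope n F) (hF0 : F ∅ = 0)
    {ι : Type*} {s : Finset ι} {T : ι → Finset (Fin n)} (hT : ∀ i ∈ s, IsTight F w (T i)) :
    IsTight F w (s.sup T) :=
  Finset.sup_induction (isTight_empty hF0) (fun _ hA _ hB => (hA.inter_union hF hw hB).2) hT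

/-- `C` is the union of the smallest tight sets through its elements. -/
lemma isTight_of_forall_mem (hF : Submodular F) (hw : w ∈ basePolytope n F) (hF0 : F ∅ = 0)
    {C : Finset (Fin n)}
    (hC : ∀ v ∈ C, ∀ x, (∀ A, IsTight F w A → v ∈ A → x ∈ A) → x ∈ C) :
    IsTight F w C := by
  classical
  let hull : Fin n → Finset (Fin n) := fun v =>
    (Finset.univ.filter fun A => IsTight F w A ∧ v ∈ A).inf id
  have hull_tight : ∀ v, IsTight F w (hull v) := fun v =>
    isTight_finset_inf hF hw fun A hA => (Finset.mem_filter.mp hA).2.1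
  have mem_hull : ∀ {v x}, x ∈ hull v ↔ ∀ A, IsTight F w A → v ∈ A → x ∈ A := by
    intro v x
    simp [hull, Finset.mem_inf]
  have hCeq : C = C.sup hull := by
    refine le_antisymm (fun v hv => Finset.mem_sup.mpr ⟨v, hv, mem_hull.mpr fun _ _ h => h⟩) ?_
    exact Finset.sup_le fun v hv x hx => hC v hv x (mem_hull.mp hx)
  rw [hCeq]
  exact isTight_finset_sup hF hw hF0 fun v _ => hull_tight v

end TightSets

section Polytope

variable {n r : ℕ}

lemma convex_basePolytope (F : Finset (Fin n) → ℝ) : Convex ℝ (basePolytope n F) := by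
  intro u hu w hw a b ha hb hab
  have hsum : ∀ A : Finset (Fin n), ∑ i ∈ A, (a • u + b • w) i =
      a * ∑ i ∈ A, u i + b * ∑ i ∈ A, w i := by
    intro A
    simp [Finset.sum_add_distrib, Finset.mul_sum]
  refine ⟨fun A => ?_, ?_⟩
  · calc ∑ i ∈ A, (a • u + b • w) i = a * ∑ i ∈ A, u i + b * ∑ i ∈ A, w i := hsum A
      _ ≤ a * F A + b * F A := by gcongr; exacts [hu.1 A, hw.1 A]
      _ = F A := by rw [← add_mul, hab, one_mul]
  · rw [hsum, hu.2, hw.2, ← add_mul, hab, one_mul]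

lemma isClosed_basePolytope (F : Finset (Fin n) → ℝ) : IsClosed (basePolytope n F) := by
  have hF : basePolytope n F = (⋂ A, {w | ∑ i ∈ A, w i ≤ F A}) ∩ {w | ∑ i, w i = F .univ} := by
    ext; simp [basePolytope]
  rw [hF]
  exact (isClosed_iInter fun A => isClosed_le (by fun_prop) continuous_const).inter
    (isClosed_eq (by fun_prop) continuous_const)

lemma feas_eq_iInter (F : Fin r → Finset (Fin n) → ℝ) :
    feas n r F = ⋂ i, (fun y : Vec n r => y i) ⁻¹' basePolytope n (F i) := by
  ext; simp [feas]

lemma convex_feas (F : Fin r → Finset (Fin n) → ℝ) : Convex ℝ (feas n r F) :=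
  fun _ hy _ hz _ _ ha hb hab i => convex_basePolytope (F i) (hy i) (hz i) ha hb hab

lemma isClosed_feas (F : Fin r → Finset (Fin n) → ℝ) : IsClosed (feas n r F) := by
  rw [feas_eq_iInter]
  exact isClosed_iInter fun i => (isClosed_basePolytope (F i)).preimage (by fun_prop)

lemma sum_sum_blocks_apply (z : Vec n r) (C : Finset (Fin n)) :
    ∑ x ∈ C, (∑ i, z i) x = ∑ i, ∑ x ∈ C, z i x := by
  simp only [WithLp.ofLp_sum, Finset.sum_apply]
  exact Finset.sum_comm

lemma sum_mem_basePolytope_sum {F : Fin r → Finset (Fin n) → ℝ} {y : Vec n r}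
    (hy : y ∈ feas n r F) : ∑ i, y i ∈ basePolytope n (fun A => ∑ i, F i A) :=
  ⟨fun A => (sum_sum_blocks_apply y A).trans_le (Finset.sum_le_sum fun i _ => (hy i).1 A),
    (sum_sum_blocks_apply y _).trans (Finset.sum_congr rfl fun i _ => (hy i).2)⟩

end Polytope

/-- The non-tight constraints have positive slack, and there are finitely many of them. -/
lemma eventually_add_smul_mem_basePolytope {n : ℕ} {F : Finset (Fin n) → ℝ}
    {w d : EuclideanSpace ℝ (Fin n)} (hw : w ∈ basePolytope n F) (hd : ∑ x, d x = 0)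
    (hdtight : ∀ A, IsTight F w A → ∑ x ∈ A, d x ≤ 0) :
    ∀ᶠ ε : ℝ in 𝓝[>] 0, w + ε • d ∈ basePolytope n F := by
  have hsum : ∀ (ε : ℝ) (A : Finset (Fin n)),
      ∑ x ∈ A, (w + ε • d) x = ∑ x ∈ A, w x + ε * ∑ x ∈ A, d x := by
    intro ε A
    simp [Finset.sum_add_distrib, Finset.mul_sum]
  have hle : ∀ A, ∀ᶠ ε in 𝓝[>] (0 : ℝ), ∑ x ∈ A, (w + ε • d) x ≤ F A := by
    intro A
    by_cases hA : IsTight F w A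
    · filter_upwards [self_mem_nhdsWithin] with ε hε
      rw [hsum, hA]
      nlinarith [hdtight A hA, Set.mem_Ioi.mp hε]
    · have hlt : ∑ x ∈ A, w x < F A := lt_of_le_of_ne (hw.1 A) hA
      have hcont : Continuous fun ε : ℝ => ∑ x ∈ A, w x + ε * ∑ x ∈ A, d x := by fun_prop
      have := (hcont.tendsto 0).eventually (gt_mem_nhds (by simpa using hlt))
      filter_upwards [nhdsWithin_le_nhds this] with ε hε
      rw [hsum]
      exact hε.le
  filter_upwards [eventually_all.mpr hle] with ε hε
  exact ⟨hε, by rw [hsum, hd, mul_zero, add_zero, hw.2]⟩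

/-- Along an arc `x → y` of block `i`, a little mass of `z i` can be moved from `x` to `y`
without leaving `B(F i)`. -/
def exchangeArc {n r : ℕ} (F : Fin r → Finset (Fin n) → ℝ) (z : Vec n r) (x y : Fin n) :
    Prop :=
  ∃ i, ∀ A, IsTight (F i) (z i) A → y ∈ A → x ∈ A

/-- If no vertex with surplus reaches a vertex with deficit, the unreachable vertices form a
set that is tight in every block, hence has nonnegative surplus although it contains a
deficit vertex and no surplus vertex. -/
lemma exists_augmenting_path {n r : ℕ} {F : Fin r → Finset (Fin n) → ℝ}
    (hsub : ∀ i, Submodular (F i)) (hnorm : ∀ i, F i ∅ = 0) {z : Vec n r}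
    (hz : z ∈ feas n r F) {a : EuclideanSpace ℝ (Fin n)}
    (ha : ∀ C, ∑ x ∈ C, a x ≤ ∑ i, F i C) {v : Fin n} (hv : (∑ i, z i) v < a v) :
    ∃ u w, a u < (∑ i, z i) u ∧ (∑ i, z i) w < a w ∧
      Relation.ReflTransGen (exchangeArc F z) u w := by
  classical
  by_contra! hnone
  set s := ∑ i, z i
  let C := Finset.univ.filter fun x =>
    ∀ u, a u < s u → ¬ Relation.ReflTransGen (exchangeArc F z) u x
  have hvC : v ∈ C := by simpa [C] using fun u hu => hnone u v hu hv
  have hC_le : ∀ x ∈ C, s x ≤ a x := fun x hx => by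
    by_contra! hlt
    exact (Finset.mem_filter.mp hx).2 x hlt .refl
  have hC_tight : ∀ i, IsTight (F i) (z i) C := by
    refine fun i => isTight_of_forall_mem (hsub i) (hz i) (hnorm i) fun y hy x hx => ?_
    simp only [C, Finset.mem_filter, Finset.mem_univ, true_and] at hy ⊢
    exact fun u hu hux => hy u hu (hux.tail ⟨i, hx⟩)
  have hC_ge : ∑ x ∈ C, a x ≤ ∑ x ∈ C, s x := by
    rw [sum_sum_blocks_apply]
    exact (ha C).trans_eq (Finset.sum_congr rfl fun i _ => (hC_tight i).symm)
  have hC_lt : ∑ x ∈ C, s x < ∑ x ∈ C, a x := Finset.sum_lt_sum hC_le ⟨v, hvC, hv⟩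
  linarith

/-- Arc `j` of the path `f` moves one unit from `f j` to `f (j + 1)` inside block `b j`. -/
def pathDirection {n r : ℕ} (f : ℕ → Fin n) (b : ℕ → Fin r) (k : ℕ) : Vec n r :=
  WithLp.toLp 2 fun i => WithLp.toLp 2 fun x =>
    ∑ j ∈ (Finset.range k).filter (b · = i),
      ((if f (j + 1) = x then 1 else 0) - (if f j = x then 1 else 0))

section PathDirection

variable {n r : ℕ} (f : ℕ → Fin n) (b : ℕ → Fin r) (k : ℕ)

lemma sum_pathDirection_apply (x : Fin n) :
    ∑ i, pathDirection f b k i x = (if f k = x then 1 else 0) - (if f 0 = x then 1 else 0) := by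
  simp only [pathDirection]
  rw [Finset.sum_fiberwise (Finset.range k) b,
    Finset.sum_range_sub (fun j => if f j = x then (1 : ℝ) else 0)]

lemma sum_mem_pathDirection (i : Fin r) (A : Finset (Fin n)) :
    ∑ x ∈ A, pathDirection f b k i x = ∑ j ∈ (Finset.range k).filter (b · = i),
      ((if f (j + 1) ∈ A then 1 else 0) - (if f j ∈ A then 1 else 0)) := by
  simp only [pathDirection]
  rw [Finset.sum_comm]
  simp [Finset.sum_sub_distrib, Finset.sum_ite_eq]

lemma sum_pathDirection_univ (i : Fin r) : ∑ x, pathDirection f b k i x = 0 := by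
  simp [sum_mem_pathDirection]

lemma sum_mem_pathDirection_nonpos {i : Fin r} {A : Finset (Fin n)}
    (hA : ∀ j < k, b j = i → f (j + 1) ∈ A → f j ∈ A) :
    ∑ x ∈ A, pathDirection f b k i x ≤ 0 := by
  rw [sum_mem_pathDirection]
  refine Finset.sum_nonpos fun j hj => ?_
  simp only [Finset.mem_filter, Finset.mem_range] at hj
  by_cases h : f (j + 1) ∈ A
  · simp [h, hA j hj.1 hj.2 h]
  · by_cases h' : f j ∈ A <;> simp [h, h']

variable {f} in
lemma abs_pathDirection_le_one (hf : Set.InjOn f (Set.Iic k)) (i : Fin r) (x : Fin n) :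
    |pathDirection f b k i x| ≤ 1 := by
  have hcard : ∀ g : ℕ → ℕ, (∀ j < k, g j ≤ k) → (∀ j < k, ∀ j' < k, g j = g j' → j = j') →
      (((Finset.range k).filter (b · = i)).filter (fun j => f (g j) = x)).card ≤ 1 := by
    intro g hgk hg
    refine Finset.card_le_one.mpr fun j hj j' hj' => ?_
    simp only [Finset.mem_filter, Finset.mem_range] at hj hj'
    exact hg j hj.1.1 j' hj'.1.1 (hf (hgk j hj.1.1) (hgk j' hj'.1.1) (hj.2.trans hj'.2.symm))
  have hsucc := hcard (· + 1) (fun j hj => hj) (fun _ _ _ _ h => Nat.succ_injective h)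
  have hself := hcard id (fun j hj => hj.le) (fun _ _ _ _ h => h)
  have habs : ∀ p q : ℕ, p ≤ 1 → q ≤ 1 → |(p : ℝ) - q| ≤ 1 := by
    intro p q hp hq
    interval_cases p <;> interval_cases q <;> norm_num
  simp only [pathDirection, Finset.sum_sub_distrib, Finset.sum_boole]
  exact habs _ _ hsucc hself

end PathDirection

/-- Push `ε` along a shortest exchange path from a surplus to a deficit vertex; as the path is
simple, every coordinate moves by at most `ε`. -/
lemma exists_discrepancy_step {n r : ℕ} {F : Fin r → Finset (Fin n) → ℝ}
    (hsub : ∀ i, Submodular (F i)) (hnorm : ∀ i, F i ∅ = 0) {z : Vec n r}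
    (hz : z ∈ feas n r F) {a : EuclideanSpace ℝ (Fin n)}
    (ha : a ∈ basePolytope n (fun A => ∑ i, F i A)) (hpos : 0 < l1Dist (∑ i, z i) a) :
    ∃ z' ∈ feas n r F, ∃ ε > 0, l1Dist (∑ i, z' i) a = l1Dist (∑ i, z i) a - 2 * ε ∧
      ∀ i x, |z' i x - z i x| ≤ ε := by
  classical
  set s := ∑ i, z i
  have htotal : ∑ x, (a x - s x) = 0 := by
    rw [Finset.sum_sub_distrib, sum_sum_blocks_apply, ha.2]
    exact sub_eq_zero.mpr (Finset.sum_congr rfl fun i _ => (hz i).2.symm)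
  have hne : ∃ x ∈ Finset.univ, a x - s x ≠ 0 := by
    by_contra! h
    simp [l1Dist, abs_sub_comm, h] at hpos
  obtain ⟨v, -, hv⟩ := Finset.exists_pos_of_sum_zero_of_exists_nonzero _ htotal hne
  obtain ⟨u, w, hu, hw, hpath⟩ := exists_augmenting_path hsub hnorm hz ha.1 (sub_pos.mp hv)
  have huw : u ≠ w := fun h => by subst h; linarith
  obtain ⟨k, f, hf0, hfk, harc, hinj⟩ := hpath.exists_injOn_path
  have hk : 0 < k := Nat.pos_of_ne_zero fun h => huw (by rw [← hf0, ← hfk, h])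
  have : Nonempty (Fin r) := ⟨(harc 0 hk).choose⟩
  have hblock : ∀ j, ∃ i, j < k → ∀ A, IsTight (F i) (z i) A → f (j + 1) ∈ A → f j ∈ A :=
    fun j => if hj : j < k then (harc j hj).imp fun _ h _ => h
      else ⟨Classical.arbitrary _, fun h => absurd h hj⟩
  choose b hb using hblock
  set d := pathDirection f b k
  have hfeas : ∀ᶠ ε : ℝ in 𝓝[>] 0, z + ε • d ∈ feas n r F := by
    refine eventually_all.mpr fun i => ?_
    simpa using eventually_add_smul_mem_basePolytope (hz i) (sum_pathDirection_univ f b k i)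
      fun A hA => sum_mem_pathDirection_nonpos f b k fun j hj hbj => hb j hj A (hbj ▸ hA)
  obtain ⟨ε, ⟨hε0, hεle⟩, hεfeas⟩ :=
    (Eventually.and (Ioc_mem_nhdsGT (lt_min (sub_pos.mpr hu) (sub_pos.mpr hw))) hfeas).exists
  refine ⟨z + ε • d, hεfeas, ε, hε0, ?_, fun i x => ?_⟩
  · have hcol : ∀ x, (∑ i, (z + ε • d) i) x - a x = (s x - a x) +
        ε * ((if w = x then 1 else 0) - (if u = x then 1 else 0)) := by
      intro x
      rw [← hf0, ← hfk, ← sum_pathDirection_apply f b k x]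
      simp only [s, d, WithLp.ofLp_sum, Finset.sum_apply, PiLp.add_apply, PiLp.smul_apply,
        smul_eq_mul, Finset.sum_add_distrib, Finset.mul_sum]
      ring
    simp only [l1Dist, hcol]
    exact sum_abs_add_transfer huw hε0.le (by linarith [min_le_left (s u - a u) (a w - s w)])
      (by linarith [min_le_right (s u - a u) (a w - s w)])
  · simp only [PiLp.add_apply, PiLp.smul_apply, smul_eq_mul, add_sub_cancel_left, abs_mul,
      abs_of_pos hε0]
    exact mul_le_of_le_one_right hε0.le (abs_pathDirection_le_one b k hinj i x)

/-- Minimize `l1Dist (∑ i, z i) a` over the compact set `P`; from a minimizer with positive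
value, `exists_discrepancy_step` would stay in `P` and decrease it, so the minimum is zero. -/
lemma exists_feas_sum_eq_abs_sub_le {n r : ℕ} {F : Fin r → Finset (Fin n) → ℝ}
    (hsub : ∀ i, Submodular (F i)) (hnorm : ∀ i, F i ∅ = 0) {y : Vec n r}
    (hy : y ∈ feas n r F) {a : EuclideanSpace ℝ (Fin n)}
    (ha : a ∈ basePolytope n (fun A => ∑ i, F i A)) :
    ∃ z ∈ feas n r F, ∑ i, z i = a ∧ ∀ i x, |z i x - y i x| ≤ l1Dist (∑ i, y i) a := by
  set M := l1Dist (∑ i, y i) a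
  let P := feas n r F ∩ ⋂ i, ⋂ x, {z : Vec n r | |z i x - y i x| + l1Dist (∑ i, z i) a ≤ M}
  have mem_P : ∀ {z}, z ∈ P ↔
      z ∈ feas n r F ∧ ∀ i x, |z i x - y i x| + l1Dist (∑ i, z i) a ≤ M := by
    simp [P]
  have hcont : Continuous fun z : Vec n r => l1Dist (∑ i, z i) a := by
    unfold l1Dist; fun_prop
  have hclosed : IsClosed P := (isClosed_feas F).inter <| isClosed_iInter fun i =>
    isClosed_iInter fun x => isClosed_le (by fun_prop) continuous_const
  have hbdd : Bornology.IsBounded P := by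
    refine (Metric.isBounded_closedBall (x := y) (r := √(n * r * M ^ 2))).subset fun z hz => ?_
    have hle : ∀ i x, |(z - y) i x| ≤ M := fun i x =>
      le_of_add_le_of_nonneg_left ((mem_P.mp hz).2 i x) (l1Dist_nonneg _ _)
    rw [Metric.mem_closedBall, dist_eq_norm]
    exact Real.le_sqrt_of_sq_le (norm_sq_le_of_forall_abs_le hle)
  have hyP : y ∈ P := mem_P.mpr ⟨hy, fun i x => by simp [M]⟩
  obtain ⟨z, hzP, hzmin⟩ := (Metric.isCompact_of_isClosed_isBounded hclosed hbdd).exists_isMinOn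
    ⟨y, hyP⟩ hcont.continuousOn
  have hz0 : l1Dist (∑ i, z i) a = 0 := by
    by_contra hne
    obtain ⟨z', hz', ε, hε, hdist, hmove⟩ := exists_discrepancy_step hsub hnorm (mem_P.mp hzP).1
      ha (lt_of_le_of_ne (l1Dist_nonneg _ _) (Ne.symm hne))
    have hz'P : z' ∈ P := by
      refine mem_P.mpr ⟨hz', fun i x => ?_⟩
      have htri : |z' i x - y i x| ≤ |z' i x - z i x| + |z i x - y i x| := abs_sub_le _ _ _
      linarith [hmove i x, (mem_P.mp hzP).2 i x]
    linarith [isMinOn_iff.mp hzmin z' hz'P]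
  refine ⟨z, (mem_P.mp hzP).1, eq_of_l1Dist_eq_zero hz0, fun i x => ?_⟩
  simpa [hz0] using (mem_P.mp hzP).2 i x

lemma inner_gradg {n r : ℕ} (y z : Vec n r) :
    ⟪gradg n r y, z⟫ = 2 * ⟪∑ i, y i, ∑ i, z i⟫ := by
  rw [PiLp.inner_apply]
  simp only [gradg, gradBlock, WithLp.ofLp_toLp, real_inner_smul_left]
  rw [← Finset.mul_sum, ← inner_sum]

lemma inner_nonneg_of_forall_norm_sq_le {E : Type*} [NormedAddCommGroup E]
    [InnerProductSpace ℝ E] {a d : E} (h : ∀ t : ℝ, 0 < t → t ≤ 1 → ‖a‖ ^ 2 ≤ ‖a + t • d‖ ^ 2) :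
    0 ≤ ⟪a, d⟫ := by
  have hslope : ∀ t ∈ Set.Ioc (0 : ℝ) 1, 0 ≤ 2 * ⟪a, d⟫ + t * ‖d‖ ^ 2 := by
    rintro t ⟨ht0, ht1⟩
    have := h t ht0 ht1
    rw [norm_add_sq_real, real_inner_smul_right, norm_smul, Real.norm_of_nonneg ht0.le] at this
    nlinarith
  have hlim : Tendsto (fun t : ℝ => 2 * ⟪a, d⟫ + t * ‖d‖ ^ 2) (𝓝[>] 0) (𝓝 (2 * ⟪a, d⟫)) := by
    have : Continuous fun t : ℝ => 2 * ⟪a, d⟫ + t * ‖d‖ ^ 2 := by fun_prop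
    simpa using (this.tendsto 0).mono_left nhdsWithin_le_nhds
  have := ge_of_tendsto hlim (Filter.mem_of_superset (Ioc_mem_nhdsGT one_pos) hslope)
  linarith

lemma inner_sum_sub_nonneg_of_isOptimal {n r : ℕ} {F : Fin r → Finset (Fin n) → ℝ}
    {y ystar : Vec n r} (hy : y ∈ feas n r F) (hopt : IsOptimal n r F ystar) :
    0 ≤ ⟪∑ i, ystar i, ∑ i, y i - ∑ i, ystar i⟫ := by
  refine inner_nonneg_of_forall_norm_sq_le fun t ht0 ht1 => ?_
  have := hopt.2 _ ((convex_feas F).add_smul_sub_mem hopt.1 hy ⟨ht0.le, ht1⟩)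
  simpa [g, Finset.sum_add_distrib, Finset.smul_sum, Finset.sum_sub_distrib, smul_sub] using this

lemma inner_gradg_sub_le_of_isOptimal {n r : ℕ} {F : Fin r → Finset (Fin n) → ℝ}
    {y ystar : Vec n r} (hy : y ∈ feas n r F) (hopt : IsOptimal n r F ystar) :
    ⟪gradg n r y, ystar - y⟫ ≤ -2 * ‖∑ i, y i - ∑ i, ystar i‖ ^ 2 := by
  set S := ∑ i, y i
  set A := ∑ i, ystar i
  have hfirst : 0 ≤ ⟪A, S - A⟫ := inner_sum_sub_nonneg_of_isOptimal hy hopt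
  have hsplit : ⟪S, S - A⟫ = ⟪A, S - A⟫ + ‖S - A‖ ^ 2 := by
    rw [← real_inner_self_eq_norm_sq, ← inner_add_left, add_sub_cancel]
  rw [inner_gradg]
  simp only [PiLp.sub_apply, Finset.sum_sub_distrib]
  change 2 * ⟪S, A - S⟫ ≤ _
  rw [← neg_sub, inner_neg_right, hsplit]
  linarith

lemma norm_sub_sq_le_of_isClosest {n r : ℕ} {F : Fin r → Finset (Fin n) → ℝ}
    (hsub : ∀ i, Submodular (F i)) (hnorm : ∀ i, F i ∅ = 0) {y ystar : Vec n r}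
    (hy : y ∈ feas n r F) (hopt : IsOptimal n r F ystar)
    (hclosest : ∀ z : Vec n r, IsOptimal n r F z → ‖y - ystar‖ ≤ ‖y - z‖) :
    ‖y - ystar‖ ^ 2 ≤ (n : ℝ) ^ 2 * r * ‖∑ i, y i - ∑ i, ystar i‖ ^ 2 := by
  obtain ⟨z, hz, hzA, hzy⟩ :=
    exists_feas_sum_eq_abs_sub_le hsub hnorm hy (sum_mem_basePolytope_sum hopt.1)
  have hzopt : IsOptimal n r F z := ⟨hz, fun w hw => by simpa [g, hzA] using hopt.2 w hw⟩
  calc ‖y - ystar‖ ^ 2 ≤ ‖y - z‖ ^ 2 := by gcongr; exact hclosest z hzopt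
    _ ≤ n * r * l1Dist (∑ i, y i) (∑ i, ystar i) ^ 2 :=
      norm_sq_le_of_forall_abs_le fun i x => by simpa [abs_sub_comm] using hzy i x
    _ ≤ n * r * (n * ‖∑ i, y i - ∑ i, ystar i‖ ^ 2) := by gcongr; exact l1Dist_sq_le _ _
    _ = (n : ℝ) ^ 2 * r * ‖∑ i, y i - ∑ i, ystar i‖ ^ 2 := by ring

theorem statement8_general (n r : ℕ)
    (F : Fin r → Finset (Fin n) → ℝ)
    (hsub : ∀ i, Submodular (F i)) (hnorm : ∀ i, F i ∅ = 0)
    (y ystar : Vec n r) (hy : y ∈ feas n r F)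
    (hopt : IsOptimal n r F ystar)
    (hclosest : ∀ z : Vec n r, IsOptimal n r F z → ‖y - ystar‖ ≤ ‖y - z‖) :
    ⟪gradg n r y, ystar - y⟫ ≤ -(2 / ((n : ℝ) ^ 2 * r)) * ‖y - ystar‖ ^ 2 := by
  have hgrad := inner_gradg_sub_le_of_isOptimal hy hopt
  have hdist := norm_sub_sq_le_of_isClosest hsub hnorm hy hopt hclosest
  set D := ∑ i, y i - ∑ i, ystar i
  rcases (by positivity : (0 : ℝ) ≤ (n : ℝ) ^ 2 * r).eq_or_lt with h0 | hpos
  · rw [← h0, div_zero, neg_zero, zero_mul]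
    linarith [sq_nonneg ‖D‖]
  · have : 2 / ((n : ℝ) ^ 2 * r) * ‖y - ystar‖ ^ 2 ≤ 2 * ‖D‖ ^ 2 := by
      rw [div_mul_eq_mul_div, div_le_iff₀ hpos]
      linarith
    linarith

/-- For `y ∈ 𝒴` and `y*` an optimal solution of (Prox-DSM) closest to `y`,
`⟨∇g(y), y* - y⟩ ≤ -(2/(n²r))‖y - y*‖²`. -/
theorem statement8 (n r : ℕ) (hn : 1 ≤ n) (hr : 1 ≤ r)
    (F : Fin r → Finset (Fin n) → ℝ)
    (hsub : ∀ i, Submodular (F i)) (hnorm : ∀ i, F i ∅ = 0)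
    (y ystar : Vec n r) (hy : y ∈ feas n r F)
    (hopt : IsOptimal n r F ystar)
    (hclosest : ∀ z : Vec n r, IsOptimal n r F z → ‖y - ystar‖ ≤ ‖y - z‖) :
    ⟪gradg n r y, ystar - y⟫ ≤ -(2 / ((n : ℝ) ^ 2 * r)) * ‖y - ystar‖ ^ 2 :=
  statement8_general n r F hsub hnorm y ystar hy hopt hclosest
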